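/- The N-fold Pauli twirl: if P and P' are distinct N-fold tensor products of Pauli operators from {I, Z, X, Y}, then summing Q P Q ρ Q P' Q over all 4^N N-fold tensor products Q of Pauli operators yields the zero matrix, for every 2^N × 2^N complex matrix ρ. -/
import Mathlib

open Matrix

noncomputable def pauli : Fin 4 → Matrix (Fin 2) (Fin 2) ℂ
  | 0 => 1
  | 1 => !![0, 1; 1, 0]
  | 2 => !![0, -Complex.I; Complex.I, 0]
  | 3 => !![1, 0; 0, -1]

/-- The `N`-fold tensor (Kronecker) product of the Pauli matrices selected by `f`. -/
noncomputable def pauliWord (N : ℕ) (f : Fin N → Fin 4) :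
    Matrix (Fin N → Fin 2) (Fin N → Fin 2) ℂ :=
  fun i j => ∏ n : Fin N, pauli (f n) (i n) (j n)

noncomputable def eps (a b : Fin 4) : ℂ :=
  if a = 0 ∨ b = 0 ∨ a = b then 1 else -1

lemma pauli_conj (a b : Fin 4) : pauli a * pauli b * pauli a = eps a b • pauli b := by
  fin_cases a <;> fin_cases b <;>
    · ext i j
      fin_cases i <;> fin_cases j <;>
        simp [pauli, eps, Matrix.mul_apply, Fin.sum_univ_two, Matrix.one_apply]

lemma eps_orth (b c : Fin 4) (hbc : b ≠ c) :
    ∑ a : Fin 4, eps a b * eps a c = 0 := by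
  fin_cases b <;> fin_cases c <;> simp_all [Fin.sum_univ_four, eps]

noncomputable def word (N : ℕ) (A : Fin N → Matrix (Fin 2) (Fin 2) ℂ) :
    Matrix (Fin N → Fin 2) (Fin N → Fin 2) ℂ :=
  fun i j => ∏ n : Fin N, A n (i n) (j n)

lemma word_mul (N : ℕ) (A B : Fin N → Matrix (Fin 2) (Fin 2) ℂ) :
    word N A * word N B = word N (fun n => A n * B n) := by
  ext i j
  simp only [word, Matrix.mul_apply]
  rw [Finset.prod_univ_sum, Fintype.piFinset_univ]
  exact Finset.sum_congr rfl fun k _ => (Finset.prod_mul_distrib).symm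

lemma word_smul (N : ℕ) (c : Fin N → ℂ) (A : Fin N → Matrix (Fin 2) (Fin 2) ℂ) :
    word N (fun n => c n • A n) = (∏ n, c n) • word N A := by
  ext i j
  simp [word, Finset.prod_mul_distrib, mul_comm]

lemma pauliWord_eq (N : ℕ) (f : Fin N → Fin 4) :
    pauliWord N f = word N (fun n => pauli (f n)) := rfl

lemma pauliWord_conj (N : ℕ) (h f : Fin N → Fin 4) :
    pauliWord N h * pauliWord N f * pauliWord N h
      = (∏ n, eps (h n) (f n)) • pauliWord N f := by
  simp only [pauliWord_eq, word_mul]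
  rw [show (fun n => pauli (h n) * pauli (f n) * pauli (h n))
      = fun n => eps (h n) (f n) • pauli (f n) from funext fun n => pauli_conj _ _]
  exact word_smul N _ _

theorem stmt_12 (N : ℕ) (f g : Fin N → Fin 4) (hfg : f ≠ g)
    (ρ : Matrix (Fin N → Fin 2) (Fin N → Fin 2) ℂ) :
    ∑ h : Fin N → Fin 4,
      pauliWord N h * pauliWord N f * pauliWord N h * ρ *
        pauliWord N h * pauliWord N g * pauliWord N h = 0 := by
  obtain ⟨m, hm⟩ := Function.ne_iff.mp hfg
  have key : ∀ h : Fin N → Fin 4,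
      pauliWord N h * pauliWord N f * pauliWord N h * ρ *
        pauliWord N h * pauliWord N g * pauliWord N h
      = (∏ n, eps (h n) (f n) * eps (h n) (g n)) •
          (pauliWord N f * ρ * pauliWord N g) := by
    intro h
    have e : pauliWord N h * pauliWord N f * pauliWord N h * ρ *
        pauliWord N h * pauliWord N g * pauliWord N h
      = (pauliWord N h * pauliWord N f * pauliWord N h) * ρ *
        (pauliWord N h * pauliWord N g * pauliWord N h) := by
      noncomm_ring
    rw [e, pauliWord_conj, pauliWord_conj, smul_mul_assoc, smul_mul_assoc,
      mul_smul_comm, smul_smul, Finset.prod_mul_distrib]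
  simp only [key]
  rw [← Finset.sum_smul]
  have : ∑ h : Fin N → Fin 4, ∏ n, eps (h n) (f n) * eps (h n) (g n) = 0 := by
    rw [← Fintype.piFinset_univ,
      ← Finset.prod_univ_sum (fun _ => (Finset.univ : Finset (Fin 4)))
        (fun n a => eps a (f n) * eps a (g n))]
    exact Finset.prod_eq_zero (Finset.mem_univ m) (eps_orth _ _ hm)
  rw [this, zero_smul]
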